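/- arXiv:1404.0357 — 5 statements merged into one kernel-verified Lean document; each statement's English description precedes it below -/
import Mathlib

section
/- Let E be a module over L⁰ endowed with a topology τ such that for every τ-neighborhood V of 0 ∈ E and every ε ∈ L⁰₊₊ there exists a τ-neighborhood W of 0 with ε•W ⊆ V (this holds in any topological L⁰-module). Then the following are equivalent: (a) there exists a family 𝒫 of L⁰-seminorms on E such that the sets U_{Q,ε} := {X ∈ E : ‖X‖ ≤ ε a.e. for all ‖·‖ ∈ Q}, for Q ⊆ 𝒫 finite and ε ∈ L⁰₊₊, form a neighborhood base of 0 for τ; (b) there exists a neighborhood base 𝒰 of 0 for τ such that every U ∈ 𝒰 is L⁰-convex, L⁰-absorbent, L⁰-balanced, and closed under countable concatenations. -/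
/-!
(a) ⇒ (b): a finite seminorm ball `{X | ‖X‖ ≤ ε for ‖·‖ ∈ Q}` is `L⁰`-convex, `L⁰`-balanced and
closed under countable concatenations directly from the seminorm axioms, and it absorbs `X` with
the factor `(1 + Σ_{‖·‖ ∈ Q} ‖X‖) / ε`.

(b) ⇒ (a): every `U ∈ 𝒰` yields its gauge `p_U(X) = ess inf {Y ≥ 0 : X ∈ Y • U}`. Convexity makes
this set downward directed (glue two representations along `{Y₁ ≤ Y₂}`), so the essential
infimum exists and is an a.e. limit of members of the set; it is found by minimising
`∫ arctan Y dP`, a bounded strictly monotone functional. Passing to the limit in the defining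
inclusions makes `p_U` an `L⁰`-seminorm. Its balls are neighbourhoods because `ε • U ⊆ {p_U ≤ ε}`
and `τ` is stable under scaling by `L⁰₊₊`, and `{p_U ≤ 1/2} ⊆ U` because the representations
`X = Zₙ • Vₙ` with `Vₙ ∈ U` can be glued along the sets `{Zₙ < 1}`, which cover `Ω`.
-/

open MeasureTheory Filter Pointwise

variable {Ω : Type*} [MeasurableSpace Ω] (P : MeasureTheory.Measure Ω ) [IsProbabilityMeasure P]

noncomputable instance : CommRing (Ω →ₘ[P] ℝ) :=
  { (inferInstance : AddCommGroup (Ω →ₘ[P] ℝ)),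
    (inferInstance : CommMonoid (Ω →ₘ[P] ℝ)) with
    left_distrib := fun f g h => AEEqFun.ext (by
      filter_upwards [AEEqFun.coeFn_mul f (g + h), AEEqFun.coeFn_add g h,
        AEEqFun.coeFn_add (f * g) (f * h), AEEqFun.coeFn_mul f g, AEEqFun.coeFn_mul f h]
        with ω h1 h2 h3 h4 h5
      simp only [Pi.mul_apply, Pi.add_apply] at *
      rw [h1, h2, h3, h4, h5, mul_add])
    right_distrib := fun f g h => AEEqFun.ext (by
      filter_upwards [AEEqFun.coeFn_mul (f + g) h, AEEqFun.coeFn_add f g,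
        AEEqFun.coeFn_add (f * h) (g * h), AEEqFun.coeFn_mul f h, AEEqFun.coeFn_mul g h]
        with ω h1 h2 h3 h4 h5
      simp only [Pi.mul_apply, Pi.add_apply] at *
      rw [h1, h2, h3, h4, h5, add_mul])
    zero_mul := fun f => AEEqFun.ext (by
      filter_upwards [AEEqFun.coeFn_mul 0 f, AEEqFun.coeFn_zero (β := ℝ) (μ := P)]
        with ω h1 h2
      simp only [Pi.mul_apply, Pi.zero_apply] at *
      rw [h1, h2, zero_mul])
    mul_zero := fun f => AEEqFun.ext (by
      filter_upwards [AEEqFun.coeFn_mul f 0, AEEqFun.coeFn_zero (β := ℝ) (μ := P)]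
        with ω h1 h2
      simp only [Pi.mul_apply, Pi.zero_apply] at *
      rw [h1, h2, mul_zero]) }

/-- `L⁰₊₊`: the set of a.e. strictly positive elements. -/
def L0pp (Y : Ω →ₘ[P] ℝ) : Prop := ∀ᵐ ω ∂P, 0 < Y ω

/-- The equivalence class of the indicator function of a measurable set. -/
noncomputable def ind (A : Set Ω) (hA : MeasurableSet A) : Ω →ₘ[P] ℝ :=
  AEEqFun.mk (A.indicator fun _ => (1 : ℝ)) (aestronglyMeasurable_const.indicator hA)

section ModuleDefs

variable {E : Type*} [AddCommGroup E] [Module (Ω →ₘ[P] ℝ) E]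

/-- `L⁰`-convexity of a subset of an `L⁰`-module. -/
def IsL0Convex (U : Set E) : Prop :=
  ∀ X₁ ∈ U, ∀ X₂ ∈ U, ∀ Y : Ω →ₘ[P] ℝ, 0 ≤ Y → Y ≤ 1 → Y • X₁ + (1 - Y) • X₂ ∈ U

/-- `L⁰`-absorbency of a subset of an `L⁰`-module. -/
def IsL0Absorbent (U : Set E) : Prop :=
  ∀ X : E, ∃ Y : Ω →ₘ[P] ℝ, L0pp P Y ∧ X ∈ Y • U

/-- `L⁰`-balancedness of a subset of an `L⁰`-module. -/
def IsL0Balanced (U : Set E) : Prop :=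
  ∀ X ∈ U, ∀ Y : Ω →ₘ[P] ℝ, |Y| ≤ 1 → Y • X ∈ U

/-- Closedness under countable concatenations. -/
def IsConcatClosed (C : Set E) : Prop :=
  ∀ (A : ℕ → Set Ω) (hA : ∀ n, MeasurableSet (A n)),
    Pairwise (Function.onFun Disjoint A) → (⋃ n, A n) = Set.univ →
    ∀ X : E, (∀ n, ∃ Xn ∈ C, ind P (A n) (hA n) • X = ind P (A n) (hA n) • Xn) → X ∈ C

/-- `L⁰`-seminorm. -/
def IsL0Seminorm (p : E → (Ω →ₘ[P] ℝ)) : Prop :=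
  (∀ X : E, 0 ≤ p X) ∧ (∀ (Y : Ω →ₘ[P] ℝ) (X : E), p (Y • X) = |Y| * p X) ∧
    (∀ X₁ X₂ : E, p (X₁ + X₂) ≤ p X₁ + p X₂)

/-- The set whose essential infimum is the gauge `p_K(X)`. -/
def gaugeSet (K : Set E) (X : E) : Set (Ω →ₘ[P] ℝ) :=
  {Y : Ω →ₘ[P] ℝ | 0 ≤ Y ∧ X ∈ Y • K}

end ModuleDefs

namespace L0

open MeasureTheory Filter Topology

variable {Ω : Type*} [MeasurableSpace Ω] {P : Measure Ω}

theorem nonneg_iff {f : Ω →ₘ[P] ℝ} : 0 ≤ f ↔ ∀ᵐ ω ∂P, 0 ≤ f ω :=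
  AEEqFun.coeFn_le.symm.trans (eventuallyLE_congr AEEqFun.coeFn_zero EventuallyEq.rfl)

theorem le_one_iff {f : Ω →ₘ[P] ℝ} : f ≤ 1 ↔ ∀ᵐ ω ∂P, f ω ≤ 1 :=
  AEEqFun.coeFn_le.symm.trans (eventuallyLE_congr EventuallyEq.rfl AEEqFun.coeFn_one)

instance : IsOrderedAddMonoid (Ω →ₘ[P] ℝ) where
  add_le_add_left a b hab c := by
    rw [← AEEqFun.coeFn_le] at hab ⊢
    filter_upwards [hab, AEEqFun.coeFn_add a c, AEEqFun.coeFn_add b c] with ω h h₁ h₂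
    simp only [h₁, h₂, Pi.add_apply]
    linarith

instance : ZeroLEOneClass (Ω →ₘ[P] ℝ) :=
  ⟨nonneg_iff.2 <| by filter_upwards [AEEqFun.coeFn_one (β := ℝ) (μ := P)] with ω h; simp [h]⟩

instance : IsOrderedRing (Ω →ₘ[P] ℝ) :=
  IsOrderedRing.of_mul_nonneg fun a b ha hb => by
    rw [nonneg_iff] at ha hb ⊢
    filter_upwards [ha, hb, AEEqFun.coeFn_mul a b] with ω ha hb h
    rw [h]
    exact mul_nonneg ha hb

theorem le_of_ae_tendsto {q z : Ω →ₘ[P] ℝ} {Z : ℕ → Ω →ₘ[P] ℝ}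
    (hZ : ∀ᵐ ω ∂P, Tendsto (fun n => Z n ω) atTop (𝓝 (z ω))) (h : ∀ n, q ≤ Z n) : q ≤ z := by
  rw [← AEEqFun.coeFn_le]
  filter_upwards [hZ, ae_all_iff.2 fun n => AEEqFun.coeFn_le.2 (h n)] with ω hZ h
  exact ge_of_tendsto' hZ h

theorem ae_tendsto_add {Z₁ Z₂ : ℕ → Ω →ₘ[P] ℝ} {z₁ z₂ : Ω →ₘ[P] ℝ}
    (h₁ : ∀ᵐ ω ∂P, Tendsto (fun n => Z₁ n ω) atTop (𝓝 (z₁ ω)))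
    (h₂ : ∀ᵐ ω ∂P, Tendsto (fun n => Z₂ n ω) atTop (𝓝 (z₂ ω))) :
    ∀ᵐ ω ∂P, Tendsto (fun n => (Z₁ n + Z₂ n) ω) atTop (𝓝 ((z₁ + z₂) ω)) := by
  filter_upwards [h₁, h₂, ae_all_iff.2 fun n => AEEqFun.coeFn_add (Z₁ n) (Z₂ n),
    AEEqFun.coeFn_add z₁ z₂] with ω h₁ h₂ h h'
  rw [h']
  simp only [h, Pi.add_apply]
  exact h₁.add h₂

theorem ae_tendsto_const_mul (c : Ω →ₘ[P] ℝ) {Z : ℕ → Ω →ₘ[P] ℝ} {z : Ω →ₘ[P] ℝ}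
    (hZ : ∀ᵐ ω ∂P, Tendsto (fun n => Z n ω) atTop (𝓝 (z ω))) :
    ∀ᵐ ω ∂P, Tendsto (fun n => (c * Z n) ω) atTop (𝓝 ((c * z) ω)) := by
  filter_upwards [hZ, ae_all_iff.2 fun n => AEEqFun.coeFn_mul c (Z n),
    AEEqFun.coeFn_mul c z] with ω hZ h h'
  rw [h']
  simp only [h, Pi.mul_apply]
  exact hZ.const_mul _

theorem _root_.L0pp.nonneg {f : Ω →ₘ[P] ℝ} (hf : L0pp P f) : 0 ≤ f :=
  nonneg_iff.2 <| hf.mono fun _ h => h.le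

theorem _root_.L0pp.mono {f g : Ω →ₘ[P] ℝ} (hf : L0pp P f) (h : f ≤ g) : L0pp P g := by
  filter_upwards [hf, AEEqFun.coeFn_le.2 h] with ω hf h
  exact hf.trans_le h

theorem _root_.L0pp.mul {f g : Ω →ₘ[P] ℝ} (hf : L0pp P f) (hg : L0pp P g) : L0pp P (f * g) := by
  filter_upwards [hf, hg, AEEqFun.coeFn_mul f g] with ω hf hg h
  rw [h]
  exact mul_pos hf hg

theorem _root_.l0pp_const {c : ℝ} (hc : 0 < c) : L0pp P (AEEqFun.const Ω c) :=
  (AEEqFun.coeFn_const Ω c).mono fun _ h => h ▸ hc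

/-- With `0⁻¹ = 0`, `inv f` vanishes where `f` does. -/
noncomputable def inv (f : Ω →ₘ[P] ℝ) : Ω →ₘ[P] ℝ :=
  f.compMeasurable (·⁻¹) measurable_inv

theorem coeFn_inv (f : Ω →ₘ[P] ℝ) : ⇑(inv f) =ᵐ[P] fun ω => (f ω)⁻¹ :=
  AEEqFun.coeFn_compMeasurable _ _ _

theorem inv_nonneg {f : Ω →ₘ[P] ℝ} (hf : 0 ≤ f) : 0 ≤ inv f := by
  rw [nonneg_iff] at hf ⊢
  filter_upwards [hf, coeFn_inv f] with ω hf h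
  rw [h]
  exact _root_.inv_nonneg.2 hf

theorem _root_.L0pp.inv {f : Ω →ₘ[P] ℝ} (hf : L0pp P f) : L0pp P (inv f) := by
  filter_upwards [hf, coeFn_inv f] with ω hf h
  rw [h]
  exact _root_.inv_pos.2 hf

theorem mul_inv_cancel {f : Ω →ₘ[P] ℝ} (hf : L0pp P f) : f * inv f = 1 := by
  refine AEEqFun.ext ?_
  filter_upwards [hf, AEEqFun.coeFn_mul f (inv f), coeFn_inv f, AEEqFun.coeFn_one (β := ℝ) (μ := P)]
    with ω hf h h' h1
  simp [h, h', h1, hf.ne']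

theorem abs_mul_abs_inv_le_one (f : Ω →ₘ[P] ℝ) : |f| * |inv f| ≤ 1 := by
  rw [le_one_iff]
  filter_upwards [AEEqFun.coeFn_mul |f| |inv f|, AEEqFun.coeFn_abs f, AEEqFun.coeFn_abs (inv f),
    coeFn_inv f] with ω h h₁ h₂ h₃
  simp only [h, Pi.mul_apply, h₁, h₂, h₃, abs_inv]
  exact mul_inv_le_one

theorem abs_mul_abs_one_sub_inv_mul (f : Ω →ₘ[P] ℝ) : |f| * |1 - inv f * f| = 0 := by
  refine AEEqFun.ext ?_
  filter_upwards [AEEqFun.coeFn_mul |f| |1 - inv f * f|, AEEqFun.coeFn_abs f,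
    AEEqFun.coeFn_abs (1 - inv f * f), AEEqFun.coeFn_sub 1 (inv f * f),
    AEEqFun.coeFn_mul (inv f) f, coeFn_inv f, AEEqFun.coeFn_one (β := ℝ) (μ := P),
    AEEqFun.coeFn_zero (β := ℝ) (μ := P)] with ω h h₁ h₂ h₃ h₄ h₅ h₆ h₀
  rw [h, h₀]
  simp only [Pi.mul_apply, h₁, h₂, h₃, Pi.sub_apply, h₆, h₄, h₅]
  by_cases hf : f ω = 0 <;> simp [hf]

theorem coeFn_ind {A : Set Ω} (hA : MeasurableSet A) :
    ⇑(ind P A hA) =ᵐ[P] A.indicator 1 :=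
  AEEqFun.coeFn_mk _ _

theorem ind_nonneg {A : Set Ω} (hA : MeasurableSet A) : 0 ≤ ind P A hA :=
  nonneg_iff.2 <| (coeFn_ind hA).mono fun ω h => by rw [h]; exact Set.indicator_nonneg (by simp) ω

theorem ind_le_one {A : Set Ω} (hA : MeasurableSet A) : ind P A hA ≤ 1 :=
  le_one_iff.2 <| (coeFn_ind hA).mono fun ω h => by
    rw [h]; exact Set.indicator_le_self' (by simp) ω

theorem ind_mul_ind_of_ae_imp {A B : Set Ω} (hA : MeasurableSet A) (hB : MeasurableSet B)
    (hAB : ∀ᵐ ω ∂P, ω ∈ A → ω ∈ B) : ind P A hA * ind P B hB = ind P A hA := by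
  refine AEEqFun.ext ?_
  filter_upwards [hAB, AEEqFun.coeFn_mul (ind P A hA) (ind P B hB), coeFn_ind hA, coeFn_ind hB]
    with ω hAB h hA hB
  by_cases hω : ω ∈ A <;> simp [h, hA, hB, hω, hAB]

theorem ind_mul_self {A : Set Ω} (hA : MeasurableSet A) : ind P A hA * ind P A hA = ind P A hA :=
  ind_mul_ind_of_ae_imp hA hA (ae_of_all _ fun _ => id)

theorem le_of_forall_ind_mul_le {A : ℕ → Set Ω} (hA : ∀ n, MeasurableSet (A n))
    (hcover : ⋃ n, A n = Set.univ) {f g : Ω →ₘ[P] ℝ}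
    (h : ∀ n, ind P (A n) (hA n) * f ≤ ind P (A n) (hA n) * g) : f ≤ g := by
  rw [← AEEqFun.coeFn_le]
  filter_upwards [ae_all_iff.2 fun n => AEEqFun.coeFn_le.2 (h n),
    ae_all_iff.2 fun n => AEEqFun.coeFn_mul (ind P (A n) (hA n)) f,
    ae_all_iff.2 fun n => AEEqFun.coeFn_mul (ind P (A n) (hA n)) g,
    ae_all_iff.2 fun n => coeFn_ind (P := P) (hA n)] with ω h hf hg hA
  obtain ⟨n, hn⟩ := Set.mem_iUnion.1 (hcover ▸ Set.mem_univ ω)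
  simpa [hf, hg, hA, hn] using h n

end L0

section EssInf

open MeasureTheory Filter Topology Real

variable {Ω : Type*} [MeasurableSpace Ω] {P : Measure Ω}

/-- Stronger than `IsGLB S q`: the lower bound `q` is also an a.e. limit of members of `S`. -/
def IsEssInf (S : Set (Ω →ₘ[P] ℝ)) (q : Ω →ₘ[P] ℝ) : Prop :=
  (∀ Y ∈ S, q ≤ Y) ∧
    ∃ Z : ℕ → Ω →ₘ[P] ℝ, (∀ n, Z n ∈ S) ∧ ∀ᵐ ω ∂P, Tendsto (fun n => Z n ω) atTop (𝓝 (q ω))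

theorem exists_ae_tendsto_of_antitone {M : ℕ → Ω →ₘ[P] ℝ} (hM : Antitone M)
    (h0 : ∀ n, 0 ≤ M n) : ∃ q : Ω →ₘ[P] ℝ, ∀ᵐ ω ∂P, Tendsto (fun n => M n ω) atTop (𝓝 (q ω)) := by
  have hlim : ∀ᵐ ω ∂P, Tendsto (fun n => M n ω) atTop (𝓝 (⨅ n, M n ω)) := by
    filter_upwards [ae_all_iff.2 fun n : ℕ => AEEqFun.coeFn_le.2 (hM n.le_succ),
      ae_all_iff.2 fun n => L0.nonneg_iff.1 (h0 n)] with ω hanti h0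
    exact tendsto_atTop_ciInf (antitone_nat_of_succ_le hanti) ⟨0, Set.forall_mem_range.2 h0⟩
  have hmeas := aestronglyMeasurable_of_tendsto_ae atTop (fun n => (M n).aestronglyMeasurable) hlim
  refine ⟨AEEqFun.mk _ hmeas, ?_⟩
  filter_upwards [hlim, AEEqFun.coeFn_mk _ hmeas] with ω hlim hq
  rwa [hq]

theorem Real.norm_arctan_le_pi_div_two (x : ℝ) : ‖arctan x‖ ≤ π / 2 :=
  abs_le.2 ⟨(neg_pi_div_two_lt_arctan x).le, (arctan_lt_pi_div_two x).le⟩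

noncomputable def arctanMean (f : Ω →ₘ[P] ℝ) : ℝ := ∫ ω, arctan (f ω) ∂P

variable [IsFiniteMeasure P]

theorem integrable_arctan_comp {f : Ω → ℝ} (hf : AEStronglyMeasurable f P) :
    Integrable (fun ω => arctan (f ω)) P :=
  (integrable_const (π / 2)).mono' (continuous_arctan.comp_aestronglyMeasurable hf)
    (ae_of_all _ fun ω => norm_arctan_le_pi_div_two (f ω))

theorem bddBelow_range_arctanMean : BddBelow (Set.range (arctanMean (P := P))) := by
  refine ⟨-(π / 2 * P.real Set.univ), ?_⟩
  rintro _ ⟨f, rfl⟩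
  exact neg_le_of_abs_le <| norm_integral_le_of_norm_le_const (μ := P) <|
    ae_of_all _ fun ω => norm_arctan_le_pi_div_two (f ω)

theorem arctanMean_mono {f g : Ω →ₘ[P] ℝ} (h : f ≤ g) : arctanMean f ≤ arctanMean g :=
  integral_mono_ae (integrable_arctan_comp f.aestronglyMeasurable)
    (integrable_arctan_comp g.aestronglyMeasurable)
    ((AEEqFun.coeFn_le.2 h).mono fun _ h => arctan_strictMono.monotone h)

theorem eq_of_le_of_arctanMean_le {f g : Ω →ₘ[P] ℝ} (h : f ≤ g)
    (h' : arctanMean g ≤ arctanMean f) : f = g := by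
  have hf := integrable_arctan_comp f.aestronglyMeasurable
  have hg := integrable_arctan_comp g.aestronglyMeasurable
  have hgap : 0 ≤ᵐ[P] fun ω => arctan (g ω) - arctan (f ω) :=
    (AEEqFun.coeFn_le.2 h).mono fun _ h => sub_nonneg.2 (arctan_strictMono.monotone h)
  have hzero : ∫ ω, (arctan (g ω) - arctan (f ω)) ∂P = 0 := by
    rw [integral_sub hg hf]
    exact sub_eq_zero.2 (h'.antisymm (arctanMean_mono h))
  refine AEEqFun.ext ?_
  filter_upwards [(integral_eq_zero_iff_of_nonneg_ae hgap (hg.sub hf)).1 hzero] with ω hω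
  exact arctan_injective (sub_eq_zero.1 hω).symm

theorem tendsto_arctanMean {Z : ℕ → Ω →ₘ[P] ℝ} {z : Ω →ₘ[P] ℝ}
    (hZ : ∀ᵐ ω ∂P, Tendsto (fun n => Z n ω) atTop (𝓝 (z ω))) :
    Tendsto (fun n => arctanMean (Z n)) atTop (𝓝 (arctanMean z)) :=
  tendsto_integral_of_dominated_convergence (fun _ => π / 2)
    (fun n => continuous_arctan.comp_aestronglyMeasurable (Z n).aestronglyMeasurable)
    (integrable_const _) (fun _ => ae_of_all _ fun _ => norm_arctan_le_pi_div_two _)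
    (hZ.mono fun _ h => (continuous_arctan.tendsto _).comp h)

/-- The essential infimum is the limit of a decreasing sequence in `S` along which `arctanMean`
tends to its infimum over `S`. -/
theorem exists_isEssInf {S : Set (Ω →ₘ[P] ℝ)} (hne : S.Nonempty) (h0 : ∀ Y ∈ S, 0 ≤ Y)
    (hinf : ∀ Y₁ ∈ S, ∀ Y₂ ∈ S, Y₁ ⊓ Y₂ ∈ S) : ∃ q, IsEssInf S q := by
  have hbdd : BddBelow (arctanMean '' S) :=
    bddBelow_range_arctanMean.mono (Set.image_subset_range _ _)
  set m := sInf (arctanMean '' S)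
  have hm : ∀ Y ∈ S, m ≤ arctanMean Y := fun Y hY => csInf_le hbdd ⟨Y, hY, rfl⟩
  obtain ⟨u, -, hu, huS⟩ := exists_seq_tendsto_sInf (hne.image arctanMean) hbdd
  choose Y hYS hYu using huS
  set M : ℕ → Ω →ₘ[P] ℝ := fun n => (Finset.range (n + 1)).inf' Finset.nonempty_range_add_one Y
  have hMS : ∀ n, M n ∈ S := fun n => Finset.inf'_mem S hinf _ _ _ fun k _ => hYS k
  have hManti : Antitone M := fun i j hij =>
    Finset.inf'_mono _ (Finset.range_subset_range.2 (by omega)) _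
  obtain ⟨q, hq⟩ := exists_ae_tendsto_of_antitone hManti fun n => h0 _ (hMS n)
  have hqm : arctanMean q = m := by
    refine tendsto_nhds_unique (tendsto_arctanMean hq) ?_
    exact tendsto_of_tendsto_of_tendsto_of_le_of_le tendsto_const_nhds hu (fun n => hm _ (hMS n))
      fun n => (hYu n) ▸ arctanMean_mono (Finset.inf'_le _ (Finset.self_mem_range_succ n))
  refine ⟨q, fun Y hY => ?_, M, hMS, hq⟩
  have hlim : ∀ᵐ ω ∂P, Tendsto (fun n => (M n ⊓ Y) ω) atTop (𝓝 ((q ⊓ Y) ω)) := by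
    filter_upwards [hq, ae_all_iff.2 fun n => AEEqFun.coeFn_inf (M n) Y,
      AEEqFun.coeFn_inf q Y] with ω hq hMY hqY
    rw [hqY]
    simpa only [hMY] using hq.inf_nhds tendsto_const_nhds
  have hqY : m ≤ arctanMean (q ⊓ Y) :=
    ge_of_tendsto' (tendsto_arctanMean hlim) fun n => hm _ (hinf _ (hMS n) _ hY)
  exact inf_eq_left.1 (eq_of_le_of_arctanMean_le inf_le_left (hqm ▸ hqY))

end EssInf

section Gauge

open MeasureTheory Filter Topology

variable {Ω : Type*} [MeasurableSpace Ω] {P : Measure Ω}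
  {E : Type*} [AddCommGroup E] [Module (Ω →ₘ[P] ℝ) E] {U : Set E}

theorem IsL0Convex.smul_add_smul_mem (hU : IsL0Convex P U) {a b : Ω →ₘ[P] ℝ} (ha : 0 ≤ a)
    (hb : 0 ≤ b) {Z₁ Z₂ : E} (h₁ : Z₁ ∈ U) (h₂ : Z₂ ∈ U) : a • Z₁ + b • Z₂ ∈ (a + b) • U := by
  set t := a * L0.inv (a + b)
  have hab : (a + b) * t = a := by
    refine AEEqFun.ext ?_
    filter_upwards [L0.nonneg_iff.1 ha, L0.nonneg_iff.1 hb, AEEqFun.coeFn_mul (a + b) t,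
      AEEqFun.coeFn_mul a (L0.inv (a + b)), L0.coeFn_inv (a + b), AEEqFun.coeFn_add a b]
      with ω ha hb h₁ h₂ h₃ h₄
    simp only [t, h₁, Pi.mul_apply, h₂, h₃, h₄, Pi.add_apply]
    rcases (add_nonneg ha hb).eq_or_lt with h | h
    · simp [(add_eq_zero_iff_of_nonneg ha hb).1 h.symm]
    · field_simp
  have ht0 : 0 ≤ t := mul_nonneg ha (L0.inv_nonneg (add_nonneg ha hb))
  have ht1 : t ≤ 1 := by
    rw [L0.le_one_iff]
    filter_upwards [L0.nonneg_iff.1 ha, L0.nonneg_iff.1 hb, AEEqFun.coeFn_mul a (L0.inv (a + b)),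
      L0.coeFn_inv (a + b), AEEqFun.coeFn_add a b] with ω ha hb h₁ h₂ h₃
    simp only [t, h₁, Pi.mul_apply, h₂, h₃, Pi.add_apply]
    exact mul_inv_le_one_of_le₀ (le_add_of_nonneg_right hb) (add_nonneg ha hb)
  refine Set.mem_smul_set.2 ⟨t • Z₁ + (1 - t) • Z₂, hU _ h₁ _ h₂ t ht0 ht1, ?_⟩
  rw [smul_add, smul_smul, smul_smul, hab, mul_sub, mul_one, hab, add_sub_cancel_left]

theorem gaugeSet_nonempty (hU : IsL0Absorbent P U) (X : E) : (gaugeSet P U X).Nonempty :=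
  let ⟨Y, hY, hX⟩ := hU X
  ⟨Y, hY.nonneg, hX⟩

theorem mul_mem_gaugeSet {c Y : Ω →ₘ[P] ℝ} (hc : 0 ≤ c) {X : E} (hY : Y ∈ gaugeSet P U X) :
    c * Y ∈ gaugeSet P U (c • X) := by
  obtain ⟨hY0, Z, hZ, rfl⟩ := hY
  exact ⟨mul_nonneg hc hY0, Set.mem_smul_set.2 ⟨Z, hZ, mul_smul c Y Z⟩⟩

theorem add_mem_gaugeSet (hU : IsL0Convex P U) {X₁ X₂ : E} {Y₁ Y₂ : Ω →ₘ[P] ℝ}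
    (h₁ : Y₁ ∈ gaugeSet P U X₁) (h₂ : Y₂ ∈ gaugeSet P U X₂) :
    Y₁ + Y₂ ∈ gaugeSet P U (X₁ + X₂) := by
  obtain ⟨hY₁, Z₁, hZ₁, rfl⟩ := h₁
  obtain ⟨hY₂, Z₂, hZ₂, rfl⟩ := h₂
  exact ⟨add_nonneg hY₁ hY₂, hU.smul_add_smul_mem hY₁ hY₂ hZ₁ hZ₂⟩

theorem inf_mem_gaugeSet (hU : IsL0Convex P U) {X : E} {Y₁ Y₂ : Ω →ₘ[P] ℝ}
    (h₁ : Y₁ ∈ gaugeSet P U X) (h₂ : Y₂ ∈ gaugeSet P U X) : Y₁ ⊓ Y₂ ∈ gaugeSet P U X := by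
  have hA : MeasurableSet {ω | Y₁ ω ≤ Y₂ ω} :=
    measurableSet_le Y₁.stronglyMeasurable.measurable Y₂.stronglyMeasurable.measurable
  set e := ind P _ hA
  have hinf : Y₁ ⊓ Y₂ = e * Y₁ + (1 - e) * Y₂ := by
    refine AEEqFun.ext ?_
    filter_upwards [AEEqFun.coeFn_inf Y₁ Y₂, AEEqFun.coeFn_add (e * Y₁) ((1 - e) * Y₂),
      AEEqFun.coeFn_mul e Y₁, AEEqFun.coeFn_mul (1 - e) Y₂, AEEqFun.coeFn_sub 1 e,
      AEEqFun.coeFn_one (β := ℝ) (μ := P), L0.coeFn_ind hA] with ω h h₁ h₂ h₃ h₄ h₅ he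
    simp only [e, h, h₁, Pi.add_apply, h₂, h₃, Pi.mul_apply, h₄, Pi.sub_apply, h₅, he]
    by_cases hω : Y₁ ω ≤ Y₂ ω
    · simp [hω]
    · simp [Set.indicator_of_notMem (show ω ∉ {ω | Y₁ ω ≤ Y₂ ω} from hω), (not_le.1 hω).le]
  have h := add_mem_gaugeSet hU (mul_mem_gaugeSet (L0.ind_nonneg hA) h₁)
    (mul_mem_gaugeSet (sub_nonneg.2 (L0.ind_le_one hA)) h₂)
  rwa [← add_smul, add_sub_cancel, one_smul, ← hinf] at h

theorem abs_mul_mem_gaugeSet (hU : IsL0Balanced P U) {X : E} {W : Ω →ₘ[P] ℝ}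
    (hW : W ∈ gaugeSet P U X) (Y : Ω →ₘ[P] ℝ) : |Y| * W ∈ gaugeSet P U (Y • X) := by
  obtain ⟨hW0, Z, hZ, rfl⟩ := hW
  set s := Y * L0.inv |Y|
  have hs : |s| ≤ 1 := by
    rw [L0.le_one_iff]
    filter_upwards [AEEqFun.coeFn_abs s, AEEqFun.coeFn_mul Y (L0.inv |Y|), L0.coeFn_inv |Y|,
      AEEqFun.coeFn_abs Y] with ω h₁ h₂ h₃ h₄
    simp only [s, h₁, h₂, Pi.mul_apply, h₃, h₄, abs_mul, abs_inv, abs_abs]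
    exact mul_inv_le_one
  have hYs : |Y| * s = Y := by
    refine AEEqFun.ext ?_
    filter_upwards [AEEqFun.coeFn_mul |Y| s, AEEqFun.coeFn_mul Y (L0.inv |Y|),
      L0.coeFn_inv |Y|, AEEqFun.coeFn_abs Y] with ω h₁ h₂ h₃ h₄
    simp only [s, h₁, Pi.mul_apply, h₂, h₃, h₄]
    by_cases hY : Y ω = 0
    · simp [hY]
    · field_simp
  refine ⟨mul_nonneg (abs_nonneg Y) hW0, Set.mem_smul_set.2 ⟨s • Z, hU Z hZ s hs, ?_⟩⟩
  rw [smul_smul, smul_smul, mul_right_comm, hYs]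

theorem exists_isEssInf_gaugeSet [IsFiniteMeasure P] (hconv : IsL0Convex P U)
    (habs : IsL0Absorbent P U) :
    ∃ p : E → Ω →ₘ[P] ℝ, ∀ X, IsEssInf (gaugeSet P U X) (p X) :=
  ⟨_, fun X => (exists_isEssInf (gaugeSet_nonempty habs X) (fun _ hY => hY.1)
    fun _ h₁ _ h₂ => inf_mem_gaugeSet hconv h₁ h₂).choose_spec⟩

end Gauge

section Seminorm

open MeasureTheory Filter Topology

variable {Ω : Type*} [MeasurableSpace Ω] {P : Measure Ω}
  {E : Type*} [AddCommGroup E] [Module (Ω →ₘ[P] ℝ) E]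

theorem isL0Seminorm_of_smul_le {p : E → Ω →ₘ[P] ℝ} (h0 : ∀ X, 0 ≤ p X)
    (hadd : ∀ X₁ X₂, p (X₁ + X₂) ≤ p X₁ + p X₂) (hsmul : ∀ Y X, p (Y • X) ≤ |Y| * p X) :
    IsL0Seminorm P p := by
  refine ⟨h0, fun Y X => (hsmul Y X).antisymm ?_, hadd⟩
  -- `e` is the indicator of `{Y = 0}`, so that `X = Y⁻¹ • Y • X + e • X`
  set e := 1 - L0.inv Y * Y
  have hX : p X ≤ |L0.inv Y| * p (Y • X) + |e| * p X := calc
    p X = p (L0.inv Y • Y • X + e • X) := by rw [smul_smul, ← add_smul, add_sub_cancel, one_smul]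
    _ ≤ _ := (hadd _ _).trans (add_le_add (hsmul _ _) (hsmul _ _))
  calc |Y| * p X ≤ |Y| * (|L0.inv Y| * p (Y • X) + |e| * p X) :=
        mul_le_mul_of_nonneg_left hX (abs_nonneg Y)
    _ = |Y| * |L0.inv Y| * p (Y • X) + |Y| * |e| * p X := by ring
    _ ≤ 1 * p (Y • X) + 0 * p X := by
        rw [L0.abs_mul_abs_one_sub_inv_mul]
        exact add_le_add_left (mul_le_mul_of_nonneg_right (L0.abs_mul_abs_inv_le_one Y) (h0 _)) _
    _ = p (Y • X) := by ring

variable {U : Set E} {p : E → Ω →ₘ[P] ℝ}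

theorem isL0Seminorm_of_isEssInf_gaugeSet (hconv : IsL0Convex P U) (hbal : IsL0Balanced P U)
    (hp : ∀ X, IsEssInf (gaugeSet P U X) (p X)) : IsL0Seminorm P p := by
  refine isL0Seminorm_of_smul_le (fun X => ?_) (fun X₁ X₂ => ?_) fun Y X => ?_
  · obtain ⟨-, Z, hZ, hlim⟩ := hp X
    exact L0.le_of_ae_tendsto hlim fun n => (hZ n).1
  · obtain ⟨-, Z₁, hZ₁, hlim₁⟩ := hp X₁
    obtain ⟨-, Z₂, hZ₂, hlim₂⟩ := hp X₂
    exact L0.le_of_ae_tendsto (L0.ae_tendsto_add hlim₁ hlim₂) fun n =>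
      (hp _).1 _ (add_mem_gaugeSet hconv (hZ₁ n) (hZ₂ n))
  · obtain ⟨-, Z, hZ, hlim⟩ := hp X
    exact L0.le_of_ae_tendsto (L0.ae_tendsto_const_mul |Y| hlim) fun n =>
      (hp _).1 _ (abs_mul_mem_gaugeSet hbal (hZ n) Y)

theorem IsConcatClosed.mem_of_ae_cover {C : Set E} (hC : IsConcatClosed P C) {B : ℕ → Set Ω}
    (hB : ∀ n, MeasurableSet (B n)) (hcover : ∀ᵐ ω ∂P, ∃ n, ω ∈ B n) {X : E}
    (hX : ∀ n, ∃ Xn ∈ C, ind P (B n) (hB n) • X = ind P (B n) (hB n) • Xn) : X ∈ C := by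
  -- add the uncovered null set `N` to every `B n`, then disjointify
  set N := (⋃ n, B n)ᶜ
  set A := disjointed fun n => B n ∪ N
  have hA : ∀ n, MeasurableSet (A n) :=
    MeasurableSet.disjointed fun n => (hB n).union (MeasurableSet.iUnion hB).compl
  refine hC A hA (disjoint_disjointed _) ?_ X fun n => ?_
  · refine Set.eq_univ_of_forall fun ω => ?_
    rw [iUnion_disjointed, Set.mem_iUnion]
    by_cases hω : ω ∈ ⋃ n, B n
    · obtain ⟨n, hn⟩ := Set.mem_iUnion.1 hω
      exact ⟨n, Or.inl hn⟩
    · exact ⟨0, Or.inr hω⟩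
  · obtain ⟨Xn, hXn, hBX⟩ := hX n
    have hAB : ind P (A n) (hA n) * ind P (B n) (hB n) = ind P (A n) (hA n) := by
      refine L0.ind_mul_ind_of_ae_imp _ _ ?_
      filter_upwards [hcover] with ω ⟨k, hk⟩ hω
      exact (disjointed_subset _ n hω).resolve_right fun hN => hN (Set.mem_iUnion.2 ⟨k, hk⟩)
    exact ⟨Xn, hXn, by rw [← hAB, mul_smul, mul_smul, hBX]⟩

theorem mem_of_isEssInf_gaugeSet_lt_one (hbal : IsL0Balanced P U) (hcc : IsConcatClosed P U)
    {X : E} {q : Ω →ₘ[P] ℝ} (hq : IsEssInf (gaugeSet P U X) q) (hlt : ∀ᵐ ω ∂P, q ω < 1) :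
    X ∈ U := by
  obtain ⟨-, Z, hZ, hlim⟩ := hq
  have hB : ∀ n, MeasurableSet {ω | Z n ω < 1} := fun n =>
    measurableSet_lt (Z n).stronglyMeasurable.measurable measurable_const
  refine hcc.mem_of_ae_cover hB ?_ fun n => ?_
  · filter_upwards [hlim, hlt] with ω hlim hlt
    exact (hlim.eventually (gt_mem_nhds hlt)).exists
  · obtain ⟨hZ0, V, hV, hXV⟩ := hZ n
    set e := ind P _ (hB n)
    have hle : |e * Z n| ≤ 1 := by
      rw [L0.le_one_iff]
      filter_upwards [AEEqFun.coeFn_abs (e * Z n), AEEqFun.coeFn_mul e (Z n),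
        L0.coeFn_ind (hB n), L0.nonneg_iff.1 hZ0] with ω h₁ h₂ he hZ0
      simp only [e, h₁, h₂, Pi.mul_apply, he]
      by_cases hω : Z n ω < 1
      · simpa [hω, abs_of_nonneg hZ0] using hω.le
      · simp [hω]
    refine ⟨(e * Z n) • V, hbal V hV _ hle, ?_⟩
    rw [← hXV, smul_smul, smul_smul, ← mul_assoc, L0.ind_mul_self]

end Seminorm

section SeminormBall

open MeasureTheory Filter Topology

variable {Ω : Type*} [MeasurableSpace Ω] {P : Measure Ω}
  {E : Type*} [AddCommGroup E] [Module (Ω →ₘ[P] ℝ) E]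

def seminormBall (Q : Set (E → Ω →ₘ[P] ℝ)) (ε : Ω →ₘ[P] ℝ) : Set E :=
  {X | ∀ p ∈ Q, p X ≤ ε}

variable {Q : Set (E → Ω →ₘ[P] ℝ)}

theorem isL0Convex_seminormBall (hQ : ∀ p ∈ Q, IsL0Seminorm P p) (ε : Ω →ₘ[P] ℝ) :
    IsL0Convex P (seminormBall Q ε) := by
  intro X₁ h₁ X₂ h₂ Y hY0 hY1 p hp
  obtain ⟨-, hsmul, hadd⟩ := hQ p hp
  have hY1' : 0 ≤ 1 - Y := sub_nonneg.2 hY1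
  calc p (Y • X₁ + (1 - Y) • X₂) ≤ |Y| * p X₁ + |1 - Y| * p X₂ := by
        rw [← hsmul, ← hsmul]; exact hadd _ _
    _ ≤ Y * ε + (1 - Y) * ε := by
        rw [abs_of_nonneg hY0, abs_of_nonneg hY1']
        exact add_le_add (mul_le_mul_of_nonneg_left (h₁ p hp) hY0)
          (mul_le_mul_of_nonneg_left (h₂ p hp) hY1')
    _ = ε := by ring

theorem isL0Balanced_seminormBall (hQ : ∀ p ∈ Q, IsL0Seminorm P p) (ε : Ω →ₘ[P] ℝ) :
    IsL0Balanced P (seminormBall Q ε) := by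
  intro X hX Y hY p hp
  rw [(hQ p hp).2.1, ← one_mul ε]
  exact mul_le_mul hY (hX p hp) ((hQ p hp).1 X) zero_le_one

theorem isConcatClosed_seminormBall (hQ : ∀ p ∈ Q, IsL0Seminorm P p) (ε : Ω →ₘ[P] ℝ) :
    IsConcatClosed P (seminormBall Q ε) := by
  intro A hA _ hcover X hX p hp
  choose Xn hXn hXXn using hX
  refine L0.le_of_forall_ind_mul_le hA hcover fun n => ?_
  have habs : |ind P (A n) (hA n)| = ind P (A n) (hA n) := abs_of_nonneg (L0.ind_nonneg _)
  calc ind P (A n) (hA n) * p X = ind P (A n) (hA n) * p (Xn n) := by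
        rw [← habs, ← (hQ p hp).2.1, hXXn n, (hQ p hp).2.1]
    _ ≤ ind P (A n) (hA n) * ε := mul_le_mul_of_nonneg_left (hXn n p hp) (L0.ind_nonneg _)

theorem isL0Absorbent_seminormBall (Q : Finset (E → Ω →ₘ[P] ℝ))
    (hQ : ∀ p ∈ Q, IsL0Seminorm P p) {ε : Ω →ₘ[P] ℝ} (hε : L0pp P ε) :
    IsL0Absorbent P (seminormBall (Q : Set (E → Ω →ₘ[P] ℝ)) ε) := by
  intro X
  set S := 1 + ∑ p ∈ Q, p X
  have hS : L0pp P S := (l0pp_const one_pos).mono <| le_add_of_nonneg_right <|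
    Finset.sum_nonneg fun p hp => (hQ p hp).1 X
  refine ⟨S * L0.inv ε, hS.mul hε.inv, Set.mem_smul_set.2 ⟨(ε * L0.inv S) • X, ?_, ?_⟩⟩
  · intro p hp
    rw [(hQ p hp).2.1, abs_of_nonneg (mul_nonneg hε.nonneg hS.inv.nonneg)]
    calc ε * L0.inv S * p X ≤ ε * L0.inv S * S :=
          mul_le_mul_of_nonneg_left ((Finset.single_le_sum (fun q hq => (hQ q hq).1 X) hp).trans
            (le_add_of_nonneg_left zero_le_one)) (mul_nonneg hε.nonneg hS.inv.nonneg)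
      _ = ε := by rw [mul_assoc, mul_comm _ S, L0.mul_inv_cancel hS, mul_one]
  · rw [smul_smul, show S * L0.inv ε * (ε * L0.inv S) = S * L0.inv S * (ε * L0.inv ε) by ring,
      L0.mul_inv_cancel hS, L0.mul_inv_cancel hε, one_mul, one_smul]

end SeminormBall

section Characterization

open MeasureTheory Filter Topology

variable {Ω : Type*} [MeasurableSpace Ω] {P : Measure Ω}
  {E : Type*} [AddCommGroup E] [Module (Ω →ₘ[P] ℝ) E] {l : Filter E}

theorem exists_hasBasis_of_hasBasis_seminormBall {Ps : Set (E → Ω →ₘ[P] ℝ)}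
    (hPs : ∀ p ∈ Ps, IsL0Seminorm P p)
    (hl : l.HasBasis (fun Qε : Finset (E → Ω →ₘ[P] ℝ) × (Ω →ₘ[P] ℝ) => ↑Qε.1 ⊆ Ps ∧ L0pp P Qε.2)
      fun Qε => seminormBall ↑Qε.1 Qε.2) :
    ∃ Us : Set (Set E), l.HasBasis (· ∈ Us) id ∧
      ∀ U ∈ Us, IsL0Convex P U ∧ IsL0Absorbent P U ∧ IsL0Balanced P U ∧ IsConcatClosed P U := by
  refine ⟨_, hl.to_image_id, ?_⟩
  rintro _ ⟨⟨Q, ε⟩, ⟨hQ, hε⟩, rfl⟩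
  have hQ' : ∀ p ∈ (Q : Set (E → Ω →ₘ[P] ℝ)), IsL0Seminorm P p := fun p hp => hPs p (hQ hp)
  exact ⟨isL0Convex_seminormBall hQ' ε, isL0Absorbent_seminormBall Q hQ' hε,
    isL0Balanced_seminormBall hQ' ε, isConcatClosed_seminormBall hQ' ε⟩

theorem setOf_le_mem_of_isEssInf_gaugeSet
    (hsmul : ∀ V ∈ l, ∀ ε : Ω →ₘ[P] ℝ, L0pp P ε → ∃ W ∈ l, ε • W ⊆ V) {U : Set E} (hU : U ∈ l)
    {p : E → Ω →ₘ[P] ℝ} (hp : ∀ X, IsEssInf (gaugeSet P U X) (p X)) {ε : Ω →ₘ[P] ℝ}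
    (hε : L0pp P ε) : {X | p X ≤ ε} ∈ l := by
  obtain ⟨W, hW, hWU⟩ := hsmul U hU (L0.inv ε) hε.inv
  refine l.mem_of_superset hW fun X hX => (hp X).1 ε ⟨hε.nonneg, Set.mem_smul_set.2 ?_⟩
  exact ⟨L0.inv ε • X, hWU (Set.smul_mem_smul_set hX),
    by rw [smul_smul, L0.mul_inv_cancel hε, one_smul]⟩

theorem exists_hasBasis_seminormBall_of_hasBasis [IsFiniteMeasure P]
    (hsmul : ∀ V ∈ l, ∀ ε : Ω →ₘ[P] ℝ, L0pp P ε → ∃ W ∈ l, ε • W ⊆ V) {Us : Set (Set E)}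
    (hl : l.HasBasis (· ∈ Us) id)
    (hUs : ∀ U ∈ Us, IsL0Convex P U ∧ IsL0Absorbent P U ∧ IsL0Balanced P U ∧ IsConcatClosed P U) :
    ∃ Ps : Set (E → Ω →ₘ[P] ℝ), (∀ p ∈ Ps, IsL0Seminorm P p) ∧
      l.HasBasis (fun Qε : Finset (E → Ω →ₘ[P] ℝ) × (Ω →ₘ[P] ℝ) => ↑Qε.1 ⊆ Ps ∧ L0pp P Qε.2)
        fun Qε => seminormBall ↑Qε.1 Qε.2 := by
  choose p hp using fun U : Us => exists_isEssInf_gaugeSet (hUs U U.2).1 (hUs U U.2).2.1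
  refine ⟨Set.range p, ?_, ⟨fun V => ⟨fun hV => ?_, ?_⟩⟩⟩
  · rintro _ ⟨U, rfl⟩
    exact isL0Seminorm_of_isEssInf_gaugeSet (hUs U U.2).1 (hUs U U.2).2.2.1 (hp U)
  · obtain ⟨U, hU, hUV⟩ := hl.mem_iff.1 hV
    refine ⟨({p ⟨U, hU⟩}, AEEqFun.const Ω (1 / 2)), ⟨by simp, l0pp_const (by norm_num)⟩,
      fun X hX => hUV (mem_of_isEssInf_gaugeSet_lt_one (hUs U hU).2.2.1 (hUs U hU).2.2.2
        (hp ⟨U, hU⟩ X) ?_)⟩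
    filter_upwards [AEEqFun.coeFn_le.2 (hX _ (Finset.mem_singleton_self _)),
      AEEqFun.coeFn_const Ω (1 / 2 : ℝ)] with ω hle h
    rw [h] at hle
    exact hle.trans_lt (by norm_num)
  · rintro ⟨⟨Q, ε⟩, ⟨hQ, hε⟩, hsub⟩
    refine l.mem_of_superset ?_ hsub
    have hball : seminormBall (Q : Set (E → Ω →ₘ[P] ℝ)) ε = ⋂ q ∈ Q, {X | q X ≤ ε} := by
      ext; simp [seminormBall]
    rw [hball, biInter_finset_mem]
    intro q hq
    obtain ⟨U, rfl⟩ := hQ hq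
    exact setOf_le_mem_of_isEssInf_gaugeSet hsmul (hl.mem_of_mem U.2) (hp U) hε

end Characterization

/-- characterization of topologies induced by a family of `L⁰`-seminorms. -/
theorem stmt_0 {Ω : Type*} [MeasurableSpace Ω] (P : MeasureTheory.Measure Ω)
    [IsProbabilityMeasure P]
    {E : Type*} [AddCommGroup E] [Module (Ω →ₘ[P] ℝ) E] [TopologicalSpace E]
    (hsmul : ∀ V ∈ nhds (0 : E), ∀ ε : Ω →ₘ[P] ℝ, L0pp P ε →
      ∃ W ∈ nhds (0 : E), ε • W ⊆ V) :
    (∃ Ps : Set (E → (Ω →ₘ[P] ℝ)), (∀ p ∈ Ps, IsL0Seminorm P p) ∧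
      (nhds (0 : E)).HasBasis
        (fun Qε : Finset (E → (Ω →ₘ[P] ℝ)) × (Ω →ₘ[P] ℝ) =>
          (Qε.1 : Set (E → (Ω →ₘ[P] ℝ))) ⊆ Ps ∧ L0pp P Qε.2)
        (fun Qε => {X : E | ∀ p ∈ Qε.1, p X ≤ Qε.2})) ↔
    (∃ Us : Set (Set E), (nhds (0 : E)).HasBasis (· ∈ Us) id ∧
      ∀ U ∈ Us, IsL0Convex P U ∧ IsL0Absorbent P U ∧ IsL0Balanced P U ∧
        IsConcatClosed P U) :=
  ⟨fun ⟨_, hPs, hbasis⟩ => exists_hasBasis_of_hasBasis_seminormBall hPs hbasis,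
    fun ⟨_, hbasis, hUs⟩ => exists_hasBasis_seminormBall_of_hasBasis hsmul hbasis hUs⟩
end

section
/- Let E be a module over L⁰, let 𝒫 be a family of L⁰-seminorms on E, let Q ⊆ 𝒫 be finite and ε ∈ L⁰₊₊. Then U_{Q,ε} := {X ∈ E : ‖X‖ ≤ ε a.e. for all ‖·‖ ∈ Q} is closed under countable concatenations: if {A_n} is a countable measurable partition of Ω, X ∈ E, and there are X_n ∈ U_{Q,ε} with 1_{A_n}•X = 1_{A_n}•X_n for all n, then X ∈ U_{Q,ε}. -/
open MeasureTheory Filter Pointwise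

variable {Ω : Type*} [MeasurableSpace Ω] (P : MeasureTheory.Measure Ω ) [IsProbabilityMeasure P]

/-! An `L⁰`-seminorm is local, `‖1_A • X‖ = 1_A ‖X‖`, so on each `A n` the seminorm of `X` agrees
a.e. with that of `Xn n`, which is at most `ε`; countably many such a.e. bounds glue to `‖X‖ ≤ ε`. -/

namespace MeasureTheory.AEEqFun

variable {μ : Measure Ω}

theorem ae_eq_of_mul_left_eq {Y f g : Ω →ₘ[μ] ℝ} (h : Y * f = Y * g) :
    ∀ᵐ ω ∂μ, Y ω ≠ 0 → f ω = g ω := by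
  have hfg : ⇑(Y * f) =ᵐ[μ] ⇑(Y * g) := by rw [h]
  filter_upwards [coeFn_mul Y f, coeFn_mul Y g, hfg] with ω hf hg hfg hY
  rw [hf, hg] at hfg
  exact mul_left_cancel₀ hY hfg

theorem le_of_ae_le_on_cover {ι β : Type*} [Countable ι] [TopologicalSpace β] [Preorder β]
    {A : ι → Set Ω} (hcover : ⋃ i, A i = Set.univ) {f g : Ω →ₘ[μ] β}
    (h : ∀ i, ∀ᵐ ω ∂μ, ω ∈ A i → f ω ≤ g ω) : f ≤ g := by
  rw [← coeFn_le]
  filter_upwards [ae_all_iff.2 h] with ω hω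
  obtain ⟨i, hi⟩ := Set.mem_iUnion.1 (hcover ▸ Set.mem_univ ω)
  exact hω i hi

end MeasureTheory.AEEqFun

theorem ind_ae_eq_one (μ : Measure Ω) {A : Set Ω} (hA : MeasurableSet A) :
    ∀ᵐ ω ∂μ, ω ∈ A → ind μ A hA ω = 1 := by
  filter_upwards [AEEqFun.coeFn_mk (μ := μ) (A.indicator fun _ => (1 : ℝ)) _] with ω hω hmem
  rw [ind, hω, Set.indicator_of_mem hmem]

theorem IsL0Seminorm.ae_eq_on_of_ind_smul_eq {μ : Measure Ω}
    {E : Type*} [AddCommGroup E] [Module (Ω →ₘ[μ] ℝ) E] {p : E → (Ω →ₘ[μ] ℝ)}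
    (hp : IsL0Seminorm μ p) {A : Set Ω} {hA : MeasurableSet A} {X X' : E}
    (h : ind μ A hA • X = ind μ A hA • X') :
    ∀ᵐ ω ∂μ, ω ∈ A → p X ω = p X' ω := by
  have hmul : |ind μ A hA| * p X = |ind μ A hA| * p X' := by
    rw [← hp.2.1, ← hp.2.1, h]
  filter_upwards [AEEqFun.ae_eq_of_mul_left_eq hmul, ind_ae_eq_one μ hA,
    AEEqFun.coeFn_abs (ind μ A hA)] with ω hloc hind habs hω
  apply hloc
  rw [habs, hind hω, abs_one]
  exact one_ne_zero

theorem stmt_2_general {Ω : Type*} [MeasurableSpace Ω] (P : MeasureTheory.Measure Ω)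
    [IsProbabilityMeasure P]
    {E : Type*} [AddCommGroup E] [Module (Ω →ₘ[P] ℝ) E]
    (Ps : Set (E → (Ω →ₘ[P] ℝ))) (hPs : ∀ p ∈ Ps, IsL0Seminorm P p)
    (Q : Finset (E → (Ω →ₘ[P] ℝ))) (hQ : (Q : Set (E → (Ω →ₘ[P] ℝ))) ⊆ Ps)
    (ε : Ω →ₘ[P] ℝ) :
    IsConcatClosed P {X : E | ∀ p ∈ Q, p X ≤ ε} := by
  intro A hA _ hcover X hX p hp
  refine AEEqFun.le_of_ae_le_on_cover hcover fun n => ?_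
  obtain ⟨Xn, hXn, hXeq⟩ := hX n
  filter_upwards [(hPs p (hQ hp)).ae_eq_on_of_ind_smul_eq hXeq, AEEqFun.coeFn_le.2 (hXn p hp)]
    with ω hloc hle hω
  exact (hloc hω).trans_le hle

/-- the seminorm balls `U_{Q,ε}` are closed under countable concatenations. -/
theorem stmt_2 {Ω : Type*} [MeasurableSpace Ω] (P : MeasureTheory.Measure Ω)
    [IsProbabilityMeasure P]
    {E : Type*} [AddCommGroup E] [Module (Ω →ₘ[P] ℝ) E]
    (Ps : Set (E → (Ω →ₘ[P] ℝ))) (hPs : ∀ p ∈ Ps, IsL0Seminorm P p)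
    (Q : Finset (E → (Ω →ₘ[P] ℝ))) (hQ : (Q : Set (E → (Ω →ₘ[P] ℝ))) ⊆ Ps)
    (ε : Ω →ₘ[P] ℝ) (hε : L0pp P ε) :
    IsConcatClosed P {X : E | ∀ p ∈ Q, p X ≤ ε} :=
  stmt_2_general P Ps hPs Q hQ ε
end

section
/- Let E be a module over L⁰ and K ⊆ E an L⁰-convex and L⁰-absorbent set. Let X ∈ E and A ∈ ℱ. If a ∈ L⁰ is a greatest lower bound (a.e. order) of {Y ∈ L⁰₊ : X ∈ Y•K} and b ∈ L⁰ is a greatest lower bound of {Y ∈ L⁰₊ : 1_A•X ∈ Y•K}, then 1_A·b = 1_A·a (i.e., 1_A·p_K(1_A X) = 1_A·p_K(X)). -/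
open MeasureTheory Filter Pointwise

variable {Ω : Type*} [MeasurableSpace Ω] (P : MeasureTheory.Measure Ω ) [IsProbabilityMeasure P]

/-!
Write `e = 1_A`: an idempotent with `0 ≤ e ≤ 1` in the ordered ring `L⁰`. If `a` is a greatest
lower bound of `S` and `e * c ≤ e * Y` for every `Y ∈ S`, then `e * c + (1 - e) * a` is again a
lower bound of `S`, so `e * c ≤ e * a`; it therefore suffices to compare the two gauge sets on `A`.

If `X ∈ Y • K` then `1_A • X ∈ (1_A * Y) • K`, which gives `1_A * b ≤ 1_A * a`. Conversely, let
`1_A • X ∈ Y • K`. As `K` is `L⁰`-convex and contains `0` (by absorbency), `Y • K ⊆ W • K` whenever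
`0 ≤ Y ≤ W` with `W` invertible, e.g. `W = Y + ε`. Pasting `1_A • X ∈ (Y + ε) • K` on `A` with
`X ∈ Z • K` (absorbency again) off `A` puts `1_A * (Y + ε) + (1 - 1_A) * Z` in the gauge set of `X`,
so `1_A * a ≤ 1_A * (Y + ε)` for every `ε > 0`.
-/

open Topology

theorem IsGLB.mul_le_mul_of_isIdempotentElem {R : Type*} [CommRing R] [PartialOrder R]
    [IsOrderedRing R] {S : Set R} {a c e : R} (ha : IsGLB S a) (he : IsIdempotentElem e)
    (he0 : 0 ≤ e) (he1 : e ≤ 1) (hc : ∀ y ∈ S, e * c ≤ e * y) : e * c ≤ e * a := by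
  have hlb : e * c + (1 - e) * a ∈ lowerBounds S := fun y hy =>
    calc e * c + (1 - e) * a ≤ e * y + (1 - e) * y :=
          add_le_add (hc y hy) (mul_le_mul_of_nonneg_left (ha.1 hy) (sub_nonneg.2 he1))
      _ = y := by ring
  calc e * c = e * (e * c + (1 - e) * a) := by linear_combination (a - c) * he.eq
    _ ≤ e * a := mul_le_mul_of_nonneg_left (ha.2 hlb) he0

variable {μ : Measure Ω}

instance : IsOrderedAddMonoid (Ω →ₘ[μ] ℝ) where
  add_le_add_left f g hfg h := by
    rw [← AEEqFun.coeFn_le] at hfg ⊢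
    filter_upwards [hfg, AEEqFun.coeFn_add f h, AEEqFun.coeFn_add g h] with ω hω hf hg
    simpa [hf, hg] using hω

instance : ZeroLEOneClass (Ω →ₘ[μ] ℝ) where
  zero_le_one := by
    rw [← AEEqFun.coeFn_le]
    filter_upwards [AEEqFun.coeFn_zero (β := ℝ) (μ := μ), AEEqFun.coeFn_one (β := ℝ) (μ := μ)]
      with ω h0 h1
    simp [h0, h1]

instance : IsOrderedRing (Ω →ₘ[μ] ℝ) :=
  IsOrderedRing.of_mul_nonneg fun f g hf hg => by
    rw [← AEEqFun.coeFn_le] at hf hg ⊢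
    filter_upwards [hf, hg, AEEqFun.coeFn_mul f g, AEEqFun.coeFn_zero (β := ℝ) (μ := μ)]
      with ω hf hg hfg h0
    simp only [h0, hfg, Pi.zero_apply, Pi.mul_apply] at *
    exact mul_nonneg hf hg

theorem le_of_forall_pos_le_add_const_mul {x y z : Ω →ₘ[μ] ℝ}
    (h : ∀ ε : ℝ, 0 < ε → x ≤ y + AEEqFun.const Ω ε * z) : x ≤ y := by
  have hn : ∀ n : ℕ, ∀ᵐ ω ∂μ, x ω ≤ y ω + 1 / ((n : ℝ) + 1) * z ω := fun n => by
    filter_upwards [AEEqFun.coeFn_le.2 (h (1 / ((n : ℝ) + 1)) Nat.one_div_pos_of_nat),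
      AEEqFun.coeFn_add y (AEEqFun.const Ω (1 / ((n : ℝ) + 1)) * z),
      AEEqFun.coeFn_mul (AEEqFun.const Ω (1 / ((n : ℝ) + 1))) z,
      AEEqFun.coeFn_const (μ := μ) Ω (1 / ((n : ℝ) + 1))] with ω hω hadd hmul hconst
    rwa [hadd, Pi.add_apply, hmul, Pi.mul_apply, hconst] at hω
  rw [← AEEqFun.coeFn_le]
  filter_upwards [ae_all_iff.2 hn] with ω hω
  have hlim : Tendsto (fun n : ℕ => y ω + 1 / ((n : ℝ) + 1) * z ω) atTop (𝓝 (y ω)) := by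
    simpa using tendsto_const_nhds.add (tendsto_one_div_add_atTop_nhds_zero_nat.mul_const (z ω))
  exact ge_of_tendsto' hlim hω

theorem L0pp.nonneg_s4 {W : Ω →ₘ[μ] ℝ} (hW : L0pp μ W) : 0 ≤ W := by
  rw [← AEEqFun.coeFn_le]
  filter_upwards [hW, AEEqFun.coeFn_zero (β := ℝ) (μ := μ)] with ω hω h0
  simpa [h0] using hω.le

theorem L0pp.mono_s4 {W V : Ω →ₘ[μ] ℝ} (hW : L0pp μ W) (hWV : W ≤ V) : L0pp μ V := by
  filter_upwards [hW, AEEqFun.coeFn_le.2 hWV] with ω hW hWV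
  exact hW.trans_le hWV

theorem L0pp_const {ε : ℝ} (hε : 0 < ε) : L0pp μ (AEEqFun.const Ω ε) := by
  filter_upwards [AEEqFun.coeFn_const (μ := μ) Ω ε] with ω hω
  rwa [hω]

theorem L0pp.exists_inv_mul_eq_one {W : Ω →ₘ[μ] ℝ} (hW : L0pp μ W) :
    ∃ V : Ω →ₘ[μ] ℝ, 0 ≤ V ∧ V * W = 1 := by
  let V : Ω →ₘ[μ] ℝ :=
    AEEqFun.mk (fun ω => (W ω)⁻¹) W.aestronglyMeasurable.aemeasurable.inv.aestronglyMeasurable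
  have hV : ⇑V =ᵐ[μ] fun ω => (W ω)⁻¹ := AEEqFun.coeFn_mk _ _
  refine ⟨V, ?_, ?_⟩
  · rw [← AEEqFun.coeFn_le]
    filter_upwards [hV, hW, AEEqFun.coeFn_zero (β := ℝ) (μ := μ)] with ω hV hW h0
    simpa [hV, h0] using hW.le
  · refine AEEqFun.ext ?_
    filter_upwards [hV, hW, AEEqFun.coeFn_mul V W, AEEqFun.coeFn_one (β := ℝ) (μ := μ)]
      with ω hV hW hmul h1
    simp [hmul, hV, h1, hW.ne']

section Indicator

variable {A : Set Ω} (hA : MeasurableSet A)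

theorem isIdempotentElem_ind : IsIdempotentElem (ind μ A hA) := by
  rw [IsIdempotentElem, ind, AEEqFun.mk_mul_mk]
  congr 1
  ext ω
  by_cases hω : ω ∈ A <;> simp [hω]

theorem ind_nonneg : 0 ≤ ind μ A hA := by
  rw [ind, AEEqFun.zero_def, AEEqFun.mk_le_mk]
  exact Eventually.of_forall fun ω => Set.indicator_nonneg (fun _ _ => zero_le_one) ω

theorem ind_le_one : ind μ A hA ≤ 1 := by
  rw [ind, AEEqFun.one_def, AEEqFun.mk_le_mk]
  exact Eventually.of_forall fun ω => Set.indicator_le_self' (fun _ _ => zero_le_one) ω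


end Indicator

section Module

variable {E : Type*} [AddCommGroup E] [Module (Ω →ₘ[μ] ℝ) E] {K : Set E}

theorem IsL0Absorbent.zero_mem (habs : IsL0Absorbent μ K) : (0 : E) ∈ K := by
  obtain ⟨Y, hY, hY0⟩ := habs 0
  obtain ⟨k, hk, hYk⟩ := Set.mem_smul_set.1 hY0
  obtain ⟨V, -, hVY⟩ := hY.exists_inv_mul_eq_one
  have hk0 : k = 0 := by rw [← one_smul (Ω →ₘ[μ] ℝ) k, ← hVY, mul_smul, hYk, smul_zero]
  rwa [← hk0]

theorem IsL0Convex.mem_smul_of_le (hconv : IsL0Convex μ K) (h0 : (0 : E) ∈ K)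
    {X : E} {Y W : Ω →ₘ[μ] ℝ} (hY : 0 ≤ Y) (hYW : Y ≤ W) (hW : L0pp μ W) (hX : X ∈ Y • K) :
    X ∈ W • K := by
  obtain ⟨k, hk, rfl⟩ := Set.mem_smul_set.1 hX
  obtain ⟨V, hV0, hVW⟩ := hW.exists_inv_mul_eq_one
  have hVY1 : V * Y ≤ 1 := hVW ▸ mul_le_mul_of_nonneg_left hYW hV0
  refine Set.mem_smul_set.2
    ⟨(V * Y) • k, by simpa using hconv k hk 0 h0 (V * Y) (mul_nonneg hV0 hY) hVY1, ?_⟩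
  rw [← mul_smul, ← mul_assoc, mul_comm W V, hVW, one_mul]

theorem IsL0Convex.smul_add_mem_smul (hconv : IsL0Convex μ K) {e Y Z : Ω →ₘ[μ] ℝ}
    (he : IsIdempotentElem e) (he0 : 0 ≤ e) (he1 : e ≤ 1) {X X' : E}
    (hX : X ∈ Y • K) (hX' : X' ∈ Z • K) :
    e • X + (1 - e) • X' ∈ (e * Y + (1 - e) * Z) • K := by
  obtain ⟨k, hk, rfl⟩ := Set.mem_smul_set.1 hX
  obtain ⟨k', hk', rfl⟩ := Set.mem_smul_set.1 hX'
  refine Set.mem_smul_set.2 ⟨e • k + (1 - e) • k', hconv k hk k' hk' e he0 he1, ?_⟩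
  simp only [smul_add, ← mul_smul]
  congr 2
  · linear_combination (Y - Z) * he.eq
  · linear_combination (Z - Y) * he.eq

theorem mul_mem_gaugeSet_smul {c Y : Ω →ₘ[μ] ℝ} {X : E} (hc : 0 ≤ c)
    (hY : Y ∈ gaugeSet μ K X) : c * Y ∈ gaugeSet μ K (c • X) := by
  obtain ⟨k, hk, hYk⟩ := Set.mem_smul_set.1 hY.2
  exact ⟨mul_nonneg hc hY.1, Set.mem_smul_set.2 ⟨k, hk, by rw [mul_smul, hYk]⟩⟩

theorem IsL0Convex.mul_add_mem_gaugeSet (hconv : IsL0Convex μ K) (h0 : (0 : E) ∈ K)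
    {e Y W Z : Ω →ₘ[μ] ℝ} {X : E} (he : IsIdempotentElem e) (he0 : 0 ≤ e) (he1 : e ≤ 1)
    (hY : Y ∈ gaugeSet μ K (e • X)) (hYW : Y ≤ W) (hW : L0pp μ W) (hZ : Z ∈ gaugeSet μ K X) :
    e * W + (1 - e) * Z ∈ gaugeSet μ K X := by
  refine ⟨add_nonneg (mul_nonneg he0 hW.nonneg_s4) (mul_nonneg (sub_nonneg.2 he1) hZ.1), ?_⟩
  have hX : e • (e • X) + (1 - e) • X = X := by
    rw [← mul_smul, he.eq, ← add_smul, add_sub_cancel, one_smul]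
  rw [← hX]
  exact hconv.smul_add_mem_smul he he0 he1 (hconv.mem_smul_of_le h0 hY.1 hYW hW hY.2) hZ.2

end Module

theorem stmt_4_general {Ω : Type*} [MeasurableSpace Ω] (P : MeasureTheory.Measure Ω)
    {E : Type*} [AddCommGroup E] [Module (Ω →ₘ[P] ℝ) E]
    (K : Set E) (hconv : IsL0Convex P K) (habs : IsL0Absorbent P K)
    (X : E) (A : Set Ω) (hA : MeasurableSet A)
    (a b : Ω →ₘ[P] ℝ) (ha : IsGLB (gaugeSet P K X) a)
    (hb : IsGLB (gaugeSet P K (ind P A hA • X)) b) :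
    ind P A hA * b = ind P A hA * a := by
  set e := ind P A hA
  have he : IsIdempotentElem e := isIdempotentElem_ind hA
  have he0 : 0 ≤ e := ind_nonneg hA
  have he1 : e ≤ 1 := ind_le_one hA
  apply le_antisymm
  · refine ha.mul_le_mul_of_isIdempotentElem he he0 he1 fun Y hY => ?_
    calc e * b ≤ e * (e * Y) :=
          mul_le_mul_of_nonneg_left (hb.1 (mul_mem_gaugeSet_smul he0 hY)) he0
      _ = e * Y := by rw [← mul_assoc, he.eq]
  · refine hb.mul_le_mul_of_isIdempotentElem he he0 he1 fun Y hY => ?_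
    obtain ⟨Z, hZ, hXZ⟩ := habs X
    refine le_of_forall_pos_le_add_const_mul (z := e) fun ε hε => ?_
    set c : Ω →ₘ[P] ℝ := AEEqFun.const Ω ε
    have hc : L0pp P c := L0pp_const hε
    have hW : L0pp P (Y + c) := hc.mono_s4 (le_add_of_nonneg_left hY.1)
    have hpaste := hconv.mul_add_mem_gaugeSet habs.zero_mem he he0 he1 hY
      (le_add_of_nonneg_right hc.nonneg_s4) hW ⟨hZ.nonneg_s4, hXZ⟩
    calc e * a ≤ e * (e * (Y + c) + (1 - e) * Z) := mul_le_mul_of_nonneg_left (ha.1 hpaste) he0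
      _ = e * Y + c * e := by linear_combination (Y + c - Z) * he.eq

/-- `1_A · p_K(1_A X) = 1_A · p_K(X)` for an `L⁰`-convex, `L⁰`-absorbent `K`. -/
theorem stmt_4 {Ω : Type*} [MeasurableSpace Ω] (P : MeasureTheory.Measure Ω)
    [IsProbabilityMeasure P]
    {E : Type*} [AddCommGroup E] [Module (Ω →ₘ[P] ℝ) E]
    (K : Set E) (hconv : IsL0Convex P K) (habs : IsL0Absorbent P K)
    (X : E) (A : Set Ω) (hA : MeasurableSet A)
    (a b : Ω →ₘ[P] ℝ) (ha : IsGLB (gaugeSet P K X) a)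
    (hb : IsGLB (gaugeSet P K (ind P A hA • X)) b) :
    ind P A hA * b = ind P A hA * a :=
  stmt_4_general P K hconv habs X A hA a b ha hb
end

section
/- Let E be a module over L⁰ and K ⊆ E an L⁰-convex and L⁰-absorbent set, and let X, X' ∈ E. If a, b, c ∈ L⁰ are greatest lower bounds (a.e. order) of {Y ∈ L⁰₊ : X ∈ Y•K}, {Y ∈ L⁰₊ : X' ∈ Y•K} and {Y ∈ L⁰₊ : X+X' ∈ Y•K} respectively, then c ≤ a + b a.e.; i.e., p_K(X+X') ≤ p_K(X) + p_K(X'). -/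
/-!
If `X = Y • k` and `X' = Z • k'` with `k, k' ∈ K` and `Y, Z ≥ 0`, then
`X + X' = (Y + Z) • (L • k + (1 - L) • k')` for `L = Y / (Y + Z)`, so `Y + Z` is admissible for
`X + X'` by `L⁰`-convexity. The greatest lower bound of a Minkowski sum in an ordered group is the
sum of the greatest lower bounds, and `c` is a lower bound of that sum.
-/

open MeasureTheory Filter Pointwise

variable {Ω : Type*} [MeasurableSpace Ω] (P : MeasureTheory.Measure Ω ) [IsProbabilityMeasure P]

namespace MeasureTheory.AEEqFun

variable {α β : Type*} [MeasurableSpace α] {μ : Measure α}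

instance instIsOrderedAddMonoid [AddCommMonoid β] [PartialOrder β] [IsOrderedAddMonoid β]
    [TopologicalSpace β] [ContinuousAdd β] : IsOrderedAddMonoid (α →ₘ[μ] β) where
  add_le_add_left f g hfg h := by
    induction f, g, h using induction_on₃ with
    | H f hf g hg h hh =>
      simp only [mk_add_mk, mk_le_mk] at hfg ⊢
      filter_upwards [hfg] with x hx using add_le_add_left hx (h x)

theorem exists_mul_eq_of_nonneg_of_le {Y W : α →ₘ[μ] ℝ} (hY : 0 ≤ Y) (hYW : Y ≤ W) :
    ∃ L : α →ₘ[μ] ℝ, 0 ≤ L ∧ L ≤ 1 ∧ W * L = Y := by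
  induction Y, W using induction_on₂ with
  | H y hy w hw =>
    rw [zero_def, mk_le_mk] at hY
    rw [mk_le_mk] at hYW
    -- `L = Y / W`; where `W = 0` also `Y = 0`, so the junk value `y / 0 = 0` is harmless.
    refine ⟨mk (y / w) (hy.aemeasurable.div hw.aemeasurable).aestronglyMeasurable,
      ?_, ?_, ?_⟩
    · rw [zero_def, mk_le_mk]
      filter_upwards [hY, hYW] with x hyx hwx using div_nonneg hyx (hyx.trans hwx)
    · rw [one_def, mk_le_mk]
      filter_upwards [hY, hYW] with x hyx hwx using div_le_one_of_le₀ hwx (hyx.trans hwx)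
    · rw [mk_mul_mk, mk_eq_mk]
      filter_upwards [hY, hYW] with x hyx hwx
      exact mul_div_cancel_of_imp' fun hw0 => le_antisymm (hw0 ▸ hwx) hyx

end MeasureTheory.AEEqFun

section Gauge

variable {Ω : Type*} [MeasurableSpace Ω] {P : Measure Ω}
  {E : Type*} [AddCommGroup E] [Module (Ω →ₘ[P] ℝ) E]

theorem gaugeSet_add_subset {K : Set E} (hconv : IsL0Convex P K) (X X' : E) :
    gaugeSet P K X + gaugeSet P K X' ⊆ gaugeSet P K (X + X') := by
  rintro _ ⟨Y, ⟨hY, k, hk, rfl⟩, Z, ⟨hZ, k', hk', rfl⟩, rfl⟩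
  obtain ⟨L, hL0, hL1, hL⟩ :=
    AEEqFun.exists_mul_eq_of_nonneg_of_le hY (le_add_of_nonneg_right hZ)
  have hL' : (Y + Z) * (1 - L) = Z := by rw [mul_sub, hL, mul_one, add_sub_cancel_left]
  refine ⟨add_nonneg hY hZ, L • k + (1 - L) • k', hconv k hk k' hk' L hL0 hL1, ?_⟩
  show (Y + Z) • (L • k + (1 - L) • k') = Y • k + Z • k'
  rw [smul_add, smul_smul, smul_smul, hL, hL']

end Gauge

theorem stmt_7_general {Ω : Type*} [MeasurableSpace Ω] (P : MeasureTheory.Measure Ω)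
    {E : Type*} [AddCommGroup E] [Module (Ω →ₘ[P] ℝ) E]
    (K : Set E) (hconv : IsL0Convex P K)
    (X X' : E) (a b c : Ω →ₘ[P] ℝ)
    (ha : IsGLB (gaugeSet P K X) a) (hb : IsGLB (gaugeSet P K X') b)
    (hc : IsGLB (gaugeSet P K (X + X')) c) :
    c ≤ a + b :=
  (ha.add hb).2 (lowerBounds_mono_set (gaugeSet_add_subset hconv X X') hc.1)

/-- subadditivity of the gauge, `p_K(X+X') ≤ p_K(X) + p_K(X')`. -/
theorem stmt_7 {Ω : Type*} [MeasurableSpace Ω] (P : MeasureTheory.Measure Ω)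
    [IsProbabilityMeasure P]
    {E : Type*} [AddCommGroup E] [Module (Ω →ₘ[P] ℝ) E]
    (K : Set E) (hconv : IsL0Convex P K) (habs : IsL0Absorbent P K)
    (X X' : E) (a b c : Ω →ₘ[P] ℝ)
    (ha : IsGLB (gaugeSet P K X) a) (hb : IsGLB (gaugeSet P K X') b)
    (hc : IsGLB (gaugeSet P K (X + X')) c) :
    c ≤ a + b :=
  stmt_7_general P K hconv X X' a b c ha hb hc
end

section
/- Let E be a module over L⁰ and U ⊆ E an L⁰-convex and L⁰-absorbent set. Let X ∈ E and B ∈ ℱ, and suppose that for every A ∈ ℱ with A ⊆ B and P(A) > 0 there is no u ∈ U with 1_A•X = 1_A•u. If a ∈ L⁰ is a greatest lower bound (a.e. order) of {Y ∈ L⁰₊ : X ∈ Y•U}, then a ≥ 1 almost everywhere on B; i.e., p_U(X) ≥ 1 on B. -/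
open MeasureTheory Filter Pointwise

variable {Ω : Type*} [MeasurableSpace Ω] (P : MeasureTheory.Measure Ω ) [IsProbabilityMeasure P]

section

variable {Ω : Type*} [MeasurableSpace Ω] {P : Measure Ω}

lemma coeFn_ind {A : Set Ω} (hA : MeasurableSet A) :
    ind P A hA =ᵐ[P] A.indicator fun _ => (1 : ℝ) :=
  AEEqFun.coeFn_mk _ _

lemma ind_mul_self {A : Set Ω} (hA : MeasurableSet A) :
    ind P A hA * ind P A hA = ind P A hA := by
  refine AEEqFun.ext ?_
  filter_upwards [AEEqFun.coeFn_mul (ind P A hA) (ind P A hA), coeFn_ind hA] with ω hmul hind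
  rw [hmul, Pi.mul_apply, hind]
  by_cases hω : ω ∈ A <;> simp [hω]

lemma isUnit_of_L0pp {W : Ω →ₘ[P] ℝ} (hW : L0pp P W) : IsUnit W := by
  let W' : Ω →ₘ[P] ℝ :=
    AEEqFun.mk (fun ω => (W ω)⁻¹) W.aestronglyMeasurable.aemeasurable.inv.aestronglyMeasurable
  refine IsUnit.of_mul_eq_one W' (AEEqFun.ext ?_)
  filter_upwards [AEEqFun.coeFn_mul W W', AEEqFun.coeFn_mk (fun ω => (W ω)⁻¹) _,
    AEEqFun.coeFn_one (β := ℝ) (μ := P), hW] with ω hmul hW' hone hpos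
  rw [hmul, hone, Pi.mul_apply, hW', Pi.one_apply, mul_inv_cancel₀ hpos.ne']

lemma ind_le_of_ae_one_le {B : Set Ω} (hB : MeasurableSet B) {Y : Ω →ₘ[P] ℝ} (hY : 0 ≤ Y)
    (hYB : ∀ᵐ ω ∂P, ω ∈ B → 1 ≤ Y ω) : ind P B hB ≤ Y := by
  rw [← AEEqFun.coeFn_le]
  filter_upwards [hYB, coeFn_ind hB, AEEqFun.coeFn_le.mpr hY,
    AEEqFun.coeFn_zero (β := ℝ) (μ := P)] with ω hYω hind hY0 hzero
  rw [hind]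
  by_cases hω : ω ∈ B
  · simpa [hω] using hYω hω
  · simpa [hω, hzero] using hY0

lemma ae_one_le_of_ind_le {B : Set Ω} (hB : MeasurableSet B) {Y : Ω →ₘ[P] ℝ}
    (h : ind P B hB ≤ Y) : ∀ᵐ ω ∂P, ω ∈ B → 1 ≤ Y ω := by
  filter_upwards [AEEqFun.coeFn_le.mpr h, coeFn_ind hB] with ω hle hind hω
  simpa [hind, hω] using hle

lemma ind_mul_nonneg {S : Set Ω} (hS : MeasurableSet S) {Y : Ω →ₘ[P] ℝ} (hY : 0 ≤ Y) :
    0 ≤ ind P S hS * Y := by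
  rw [← AEEqFun.coeFn_le]
  filter_upwards [AEEqFun.coeFn_mul (ind P S hS) Y, coeFn_ind hS, AEEqFun.coeFn_le.mpr hY,
    AEEqFun.coeFn_zero (β := ℝ) (μ := P)] with ω hmul hind hY0 hzero
  rw [hmul, Pi.mul_apply, hind]
  simp only [hzero, Pi.zero_apply] at hY0 ⊢
  exact mul_nonneg (Set.indicator_nonneg (fun _ _ => zero_le_one) ω) hY0

lemma ind_mul_le_one {S : Set Ω} (hS : MeasurableSet S) {Y : Ω →ₘ[P] ℝ}
    (hYS : ∀ ω ∈ S, Y ω ≤ 1) : ind P S hS * Y ≤ 1 := by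
  rw [← AEEqFun.coeFn_le]
  filter_upwards [AEEqFun.coeFn_mul (ind P S hS) Y, coeFn_ind hS,
    AEEqFun.coeFn_one (β := ℝ) (μ := P)] with ω hmul hind hone
  rw [hmul, hone, Pi.mul_apply, hind]
  by_cases hω : ω ∈ S
  · simpa [hω] using hYS ω hω
  · simp [hω]

variable {E : Type*} [AddCommGroup E] [Module (Ω →ₘ[P] ℝ) E] {U : Set E}

lemma zero_mem_of_isL0Absorbent (habs : IsL0Absorbent P U) : (0 : E) ∈ U := by
  obtain ⟨W, hW, u, hu, hWu⟩ := habs 0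
  rwa [(isUnit_of_L0pp hW).smul_eq_zero.mp hWu] at hu

lemma smul_mem_of_isL0Convex (hconv : IsL0Convex P U) (h0 : (0 : E) ∈ U)
    {Z : Ω →ₘ[P] ℝ} (hZ0 : 0 ≤ Z) (hZ1 : Z ≤ 1) {u : E} (hu : u ∈ U) : Z • u ∈ U := by
  simpa using hconv u hu 0 h0 Z hZ0 hZ1

/-- On the part `S` of `B` where `Y < 1`, `X = Y • u` agrees with `(1_S Y) • u`, which lies in `U`
by convexity with `0 ∈ U`; so `S` must be null. -/
lemma ae_one_le_of_mem_gaugeSet (hconv : IsL0Convex P U) (habs : IsL0Absorbent P U)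
    {X : E} {B : Set Ω} (hB : MeasurableSet B)
    (h : ∀ (A : Set Ω) (hA : MeasurableSet A), A ⊆ B → 0 < P A →
      ∀ u ∈ U, ind P A hA • X ≠ ind P A hA • u)
    {Y : Ω →ₘ[P] ℝ} (hY : Y ∈ gaugeSet P U X) : ∀ᵐ ω ∂P, ω ∈ B → 1 ≤ Y ω := by
  obtain ⟨hY0, u, hu, rfl⟩ := hY
  set S := B ∩ {ω | Y ω < 1}
  have hS : MeasurableSet S := hB.inter (Y.stronglyMeasurable.measurable measurableSet_Iio)
  rw [ae_iff]
  have hSeq : {ω | ¬(ω ∈ B → 1 ≤ Y ω)} = S := by ext ω; simp [S]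
  rw [hSeq]
  by_contra hPS
  have hZu : (ind P S hS * Y) • u ∈ U :=
    smul_mem_of_isL0Convex hconv (zero_mem_of_isL0Absorbent habs) (ind_mul_nonneg hS hY0)
      (ind_mul_le_one hS fun ω hω => hω.2.le) hu
  refine h S hS Set.inter_subset_left (pos_iff_ne_zero.mpr hPS) _ hZu ?_
  rw [smul_smul, smul_smul, ← mul_assoc, ind_mul_self]

end

theorem stmt_10_general {Ω : Type*} [MeasurableSpace Ω] (P : MeasureTheory.Measure Ω)
    {E : Type*} [AddCommGroup E] [Module (Ω →ₘ[P] ℝ) E]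
    (U : Set E) (hconv : IsL0Convex P U) (habs : IsL0Absorbent P U)
    (X : E) (B : Set Ω) (hB : MeasurableSet B)
    (h : ∀ (A : Set Ω) (hA : MeasurableSet A), A ⊆ B → 0 < P A →
      ∀ u ∈ U, ind P A hA • X ≠ ind P A hA • u)
    (a : Ω →ₘ[P] ℝ) (ha : IsGLB (gaugeSet P U X) a) :
    ∀ᵐ ω ∂P, ω ∈ B → 1 ≤ a ω := by
  refine ae_one_le_of_ind_le hB (ha.2 fun Y hY => ?_)
  exact ind_le_of_ae_one_le hB hY.1 (ae_one_le_of_mem_gaugeSet hconv habs hB h hY)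

/-- if no part of `X` lies in `U` on any positive-measure subset of `B`,
then `p_U(X) ≥ 1` on `B`. -/
theorem stmt_10 {Ω : Type*} [MeasurableSpace Ω] (P : MeasureTheory.Measure Ω)
    [IsProbabilityMeasure P]
    {E : Type*} [AddCommGroup E] [Module (Ω →ₘ[P] ℝ) E]
    (U : Set E) (hconv : IsL0Convex P U) (habs : IsL0Absorbent P U)
    (X : E) (B : Set Ω) (hB : MeasurableSet B)
    (h : ∀ (A : Set Ω) (hA : MeasurableSet A), A ⊆ B → 0 < P A →
      ∀ u ∈ U, ind P A hA • X ≠ ind P A hA • u)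
    (a : Ω →ₘ[P] ℝ) (ha : IsGLB (gaugeSet P U X) a) :
    ∀ᵐ ω ∂P, ω ∈ B → 1 ≤ a ω :=
  stmt_10_general P U hconv habs X B hB h a ha
end
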